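/- arXiv:0712.4362 — 3 statements merged into one kernel-verified Lean document; each statement's English description precedes it below -/
import Mathlib

section
/- If M and N are similar right R-modules, then the centers of their endomorphism rings are isomorphic: End_{E_M}(M) ≅ End_{E_N}(N), where E_M = End(M_R) and E_N = End(N_R); equivalently Z(E_M) ≅ Z(E_N). -/
/-!
A central endomorphism `z` of `N` commutes with every linear map between finite powers of `N`,
since such a map is a matrix of endomorphisms of `N`. Hence, if `M` is a retract of `N^ι` via
`g ∘ f = id`, the endomorphism `g ∘ z^ι ∘ f` of `M` is central, and `z ↦ g ∘ z^ι ∘ f` is a ring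
homomorphism. It also intertwines with `z` along every map `N → M`, which is why transferring
back along a retraction `M^κ → N` returns `z`.
-/

/-- `M` divides `N` as modules: `M` is a direct summand of `N^(n)` for some `n`. -/
def Divides (R : Type) [Ring R] (M N : Type) [AddCommGroup M] [Module R M]
    [AddCommGroup N] [Module R N] : Prop :=
  ∃ (n : ℕ) (f : M →ₗ[R] (Fin n → N)) (g : (Fin n → N) →ₗ[R] M), ∀ m : M, g (f m) = m

/-- Similarity: each module is a direct summand of a finite direct sum of copies
of the other. -/
def SimilarModules (R : Type) [Ring R] (M N : Type) [AddCommGroup M] [Module R M]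
    [AddCommGroup N] [Module R N] : Prop :=
  Divides R M N ∧ Divides R N M

namespace Module.End

variable {S : Type*} [Ring S] {M N : Type*} [AddCommGroup M] [Module S M]
  [AddCommGroup N] [Module S N] {ι κ : Type*}

theorem compLeft_comp_eq_comp {z : Module.End S N} {z' : Module.End S M}
    (h : ∀ α : N →ₗ[S] M, z' ∘ₗ α = α ∘ₗ z) (F : N →ₗ[S] (κ → M)) :
    z'.compLeft κ ∘ₗ F = F ∘ₗ z := by
  ext x k
  exact LinearMap.congr_fun (h (LinearMap.proj k ∘ₗ F)) x

variable {z : Module.End S N}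

theorem comp_compLeft_of_mem_center [Finite ι] (hz : z ∈ Subring.center (Module.End S N))
    (G : (ι → N) →ₗ[S] N) :
    G ∘ₗ z.compLeft ι = z ∘ₗ G := by
  classical
  ext i x
  have hsingle : z.compLeft ι (Pi.single i x) = Pi.single i (z x) :=
    funext (Pi.apply_single (fun _ => z) (fun _ => map_zero z) i x)
  simpa only [Module.End.mul_apply, LinearMap.comp_apply, LinearMap.single_apply, hsingle] using
    LinearMap.congr_fun
      (Subring.mem_center_iff.mp hz (G ∘ₗ LinearMap.single S (fun _ : ι => N) i)) x

theorem compLeft_comm_of_mem_center [Finite ι] (hz : z ∈ Subring.center (Module.End S N))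
    (β : (ι → N) →ₗ[S] (κ → N)) :
    β ∘ₗ z.compLeft ι = z.compLeft κ ∘ₗ β := by
  ext x k
  exact LinearMap.congr_fun (comp_compLeft_of_mem_center hz (LinearMap.proj k ∘ₗ β)) x

section Transfer

variable (f : M →ₗ[S] (ι → N)) (g : (ι → N) →ₗ[S] M)

def transfer (z : Module.End S N) : Module.End S M :=
  g ∘ₗ z.compLeft ι ∘ₗ f

theorem transfer_add (z w : Module.End S N) :
    transfer f g (z + w) = transfer f g z + transfer f g w := by
  ext m; exact map_add g _ _

variable {f g}

theorem transfer_comp (hgf : Function.LeftInverse g f) (hz : z ∈ Subring.center (Module.End S N))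
    (α : N →ₗ[S] M) : transfer f g z ∘ₗ α = α ∘ₗ z := by
  ext x
  have hfα := compLeft_comp_eq_comp (fun β => (Subring.mem_center_iff.mp hz β).symm) (f ∘ₗ α)
  calc g (z.compLeft ι (f (α x))) = g (f (α (z x))) := congr_arg g (LinearMap.congr_fun hfα x)
    _ = α (z x) := hgf _

theorem transfer_mem_center [Finite ι] (hgf : Function.LeftInverse g f)
    (hz : z ∈ Subring.center (Module.End S N)) :
    transfer f g z ∈ Subring.center (Module.End S M) := by
  refine Subring.mem_center_iff.mpr fun e => LinearMap.ext fun m => ?_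
  calc e (g (z.compLeft ι (f m))) = g ((f ∘ₗ e ∘ₗ g) (z.compLeft ι (f m))) := (hgf _).symm
    _ = g (z.compLeft ι ((f ∘ₗ e ∘ₗ g) (f m))) :=
        congr_arg g (LinearMap.congr_fun (compLeft_comm_of_mem_center hz (f ∘ₗ e ∘ₗ g)) (f m))
    _ = g (z.compLeft ι (f (e m))) := by simp only [LinearMap.comp_apply, hgf m]

theorem transfer_mul [Finite ι] (hgf : Function.LeftInverse g f)
    (hz : z ∈ Subring.center (Module.End S N)) (w : Module.End S N) :
    transfer f g (z * w) = transfer f g z * transfer f g w := by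
  ext m
  calc g (z.compLeft ι (w.compLeft ι (f m)))
      = g ((f ∘ₗ g) (z.compLeft ι (w.compLeft ι (f m)))) := (hgf _).symm
    _ = g (z.compLeft ι ((f ∘ₗ g) (w.compLeft ι (f m)))) :=
        congr_arg g (LinearMap.congr_fun (compLeft_comm_of_mem_center hz (f ∘ₗ g)) _)

theorem transfer_one (hgf : Function.LeftInverse g f) : transfer f g 1 = 1 :=
  LinearMap.ext hgf

theorem transfer_transfer {f' : N →ₗ[S] (κ → M)} {g' : (κ → M) →ₗ[S] N}
    (hgf : Function.LeftInverse g f) (hg'f' : Function.LeftInverse g' f')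
    (hz : z ∈ Subring.center (Module.End S N)) : transfer f' g' (transfer f g z) = z := by
  ext x
  calc g' ((transfer f g z).compLeft κ (f' x)) = g' (f' (z x)) :=
        congr_arg g' (LinearMap.congr_fun (compLeft_comp_eq_comp (transfer_comp hgf hz) f') x)
    _ = z x := hg'f' _

variable (f g)

def centerTransfer [Finite ι] (hgf : Function.LeftInverse g f) :
    Subring.center (Module.End S N) →+* Subring.center (Module.End S M) where
  toFun z := ⟨transfer f g z, transfer_mem_center hgf z.2⟩
  map_one' := Subtype.ext (transfer_one hgf)
  map_mul' z w := Subtype.ext (transfer_mul hgf z.2 w)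
  map_zero' := Subtype.ext (LinearMap.ext fun _ => map_zero g)
  map_add' _ _ := Subtype.ext (transfer_add f g _ _)

end Transfer

def centerEquivOfRetracts [Finite ι] [Finite κ] {f : M →ₗ[S] (ι → N)} {g : (ι → N) →ₗ[S] M}
    {f' : N →ₗ[S] (κ → M)} {g' : (κ → M) →ₗ[S] N}
    (hgf : Function.LeftInverse g f) (hg'f' : Function.LeftInverse g' f') :
    Subring.center (Module.End S M) ≃+* Subring.center (Module.End S N) :=
  RingEquiv.ofRingHom (centerTransfer f' g' hg'f') (centerTransfer f g hgf)
    (RingHom.ext fun z => Subtype.ext <| transfer_transfer hgf hg'f' z.2)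
    (RingHom.ext fun z => Subtype.ext <| transfer_transfer hg'f' hgf z.2)

end Module.End

/-- If `M ∼ N` as right `R`-modules, then the centers of their endomorphism rings are
isomorphic: `Z(End(M_R)) ≅ Z(End(N_R))` (equivalently `End_{E_M}(M) ≅ End_{E_N}(N)`). -/
theorem similar_implies_isomorphic_centers (R : Type) [Ring R]
    (M N : Type) [AddCommGroup M] [Module Rᵐᵒᵖ M] [AddCommGroup N] [Module Rᵐᵒᵖ N]
    (h : SimilarModules Rᵐᵒᵖ M N) :
    Nonempty (Subring.center (Module.End Rᵐᵒᵖ M) ≃+* Subring.center (Module.End Rᵐᵒᵖ N)) := by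
  obtain ⟨⟨_, f, g, hgf⟩, ⟨_, f', g', hg'f'⟩⟩ := h
  exact ⟨Module.End.centerEquivOfRetracts hgf hg'f'⟩
end

section
/- A ring extension B → A is a QF extension (both left and right QF) if and only if the left B-module A is finitely generated projective and A ∼ (_BA)* = Hom_B(A, B) as (A, B)-bimodules. -/
open scoped TensorProduct

noncomputable section

section Bimod

variable (L R : Type) [Ring L] [Ring R]

def BDiv {M N : Type} [AddCommGroup M] [AddCommGroup N]
    (lM : L → M → M) (rM : M → R → M) (lN : L → N → N) (rN : N → R → N) : Prop :=
  ∃ (n : ℕ) (f : M →+ (Fin n → N)) (g : (Fin n → N) →+ M),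
    (∀ (l : L) (m : M), f (lM l m) = fun i => lN l (f m i)) ∧
    (∀ (m : M) (r : R), f (rM m r) = fun i => rN (f m i) r) ∧
    (∀ (l : L) (v : Fin n → N), g (fun i => lN l (v i)) = lM l (g v)) ∧
    (∀ (v : Fin n → N) (r : R), g (fun i => rN (v i) r) = rM (g v) r) ∧
    ∀ m : M, g (f m) = m

def BSim {M N : Type} [AddCommGroup M] [AddCommGroup N]
    (lM : L → M → M) (rM : M → R → M) (lN : L → N → N) (rN : N → R → N) : Prop :=
  BDiv L R lM rM lN rN ∧ BDiv L R lN rN lM rM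

end Bimod

section Ext

variable {R S : Type} [Ring R] [Ring S] (ψ : R →+* S)

def rdualSub : AddSubgroup (S →+ R) where
  carrier := {h | ∀ (x : S) (r : R), h (x * ψ r) = h x * r}
  add_mem' := by
    intro a b ha hb
    intro x r
    simp only [AddMonoidHom.add_apply, ha x r, hb x r, add_mul]
  zero_mem' := by intro x r; simp
  neg_mem' := by
    intro a ha x r
    simp only [AddMonoidHom.neg_apply, ha x r, neg_mul]

def ldualSub : AddSubgroup (S →+ R) where
  carrier := {h | ∀ (r : R) (x : S), h (ψ r * x) = r * h x}
  add_mem' := by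
    intro a b ha hb r x
    simp only [AddMonoidHom.add_apply, ha r x, hb r x, mul_add]
  zero_mem' := by intro r x; simp
  neg_mem' := by
    intro a ha r x
    simp only [AddMonoidHom.neg_apply, ha r x, mul_neg]

def rdualL (r : R) (h : rdualSub ψ) : rdualSub ψ :=
  ⟨(AddMonoidHom.mulLeft r).comp h.1, by
    intro x r'
    simp only [AddMonoidHom.coe_comp, Function.comp_apply, AddMonoidHom.coe_mulLeft,
      h.2 x r', mul_assoc]⟩

def rdualR (h : rdualSub ψ) (s : S) : rdualSub ψ :=
  ⟨h.1.comp (AddMonoidHom.mulLeft s), by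
    intro x r'
    simp only [AddMonoidHom.coe_comp, Function.comp_apply, AddMonoidHom.coe_mulLeft,
      ← mul_assoc]
    exact h.2 (s * x) r'⟩

def ldualL (s : S) (h : ldualSub ψ) : ldualSub ψ :=
  ⟨h.1.comp (AddMonoidHom.mulRight s), by
    intro r x
    simp only [AddMonoidHom.coe_comp, Function.comp_apply, AddMonoidHom.coe_mulRight,
      mul_assoc]
    exact h.2 r (x * s)⟩

def ldualR (h : ldualSub ψ) (r : R) : ldualSub ψ :=
  ⟨(AddMonoidHom.mulRight r).comp h.1, by
    intro r' x
    simp only [AddMonoidHom.coe_comp, Function.comp_apply, AddMonoidHom.coe_mulRight,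
      h.2 r' x, mul_assoc]⟩

def tensorRel : AddSubgroup (S ⊗[ℤ] S) :=
  AddSubgroup.closure {z | ∃ (x y : S) (r : R),
    z = (x * ψ r) ⊗ₜ[ℤ] y - x ⊗ₜ[ℤ] (ψ r * y)}

def TensorSq := (S ⊗[ℤ] S) ⧸ tensorRel ψ

instance : AddCommGroup (TensorSq ψ) := QuotientAddGroup.Quotient.addCommGroup _

def tmk (x y : S) : TensorSq ψ := QuotientAddGroup.mk (x ⊗ₜ[ℤ] y)

def tL (a : S) : TensorSq ψ →+ TensorSq ψ :=
  QuotientAddGroup.map _ _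
    ((TensorProduct.map (AddMonoidHom.mulLeft a).toIntLinearMap LinearMap.id).toAddMonoidHom)
    (by
      show tensorRel ψ ≤ AddSubgroup.comap _ (tensorRel ψ)
      rw [tensorRel, AddSubgroup.closure_le]
      rintro z ⟨x, y, r, rfl⟩
      simp only [SetLike.mem_coe, AddSubgroup.mem_comap, LinearMap.toAddMonoidHom_coe,
        map_sub, TensorProduct.map_tmul, AddMonoidHom.coe_toIntLinearMap,
        AddMonoidHom.coe_mulLeft, LinearMap.id_coe, id_eq]
      exact AddSubgroup.subset_closure ⟨a * x, y, r, by rw [mul_assoc]⟩)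

def tR (a : S) : TensorSq ψ →+ TensorSq ψ :=
  QuotientAddGroup.map _ _
    ((TensorProduct.map LinearMap.id (AddMonoidHom.mulRight a).toIntLinearMap).toAddMonoidHom)
    (by
      show tensorRel ψ ≤ AddSubgroup.comap _ (tensorRel ψ)
      rw [tensorRel, AddSubgroup.closure_le]
      rintro z ⟨x, y, r, rfl⟩
      simp only [SetLike.mem_coe, AddSubgroup.mem_comap, LinearMap.toAddMonoidHom_coe,
        map_sub, TensorProduct.map_tmul, AddMonoidHom.coe_toIntLinearMap,
        AddMonoidHom.coe_mulRight, LinearMap.id_coe, id_eq]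
      exact AddSubgroup.subset_closure ⟨x, y * a, r, by rw [mul_assoc]⟩)

/-- The multiplication map `S ⊗_R S → S`, `x ⊗ y ↦ x * y`. -/
def tmul' : TensorSq ψ →+ S :=
  QuotientAddGroup.lift _ (LinearMap.mul' ℤ S).toAddMonoidHom
    (by
      intro z hz
      induction hz using AddSubgroup.closure_induction with
      | mem z hz =>
        obtain ⟨x, y, r, rfl⟩ := hz
        simp [mul_assoc]
      | zero => simp
      | add a b _ _ ha hb =>
        simp only [AddMonoidHom.mem_ker, LinearMap.toAddMonoidHom_coe] at ha hb ⊢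
        simp [map_add, ha, hb]
      | neg a _ ha =>
        simp only [AddMonoidHom.mem_ker, LinearMap.toAddMonoidHom_coe] at ha ⊢
        simp [ha])

end Ext


section ExtEnd

variable {R S : Type} [Ring R] [Ring S] (ψ : R →+* S)

/-- `End(S_R)`: additive endomorphisms of `S` commuting with the right `R`-action
(along `ψ`), as a subring of `AddMonoid.End S`. -/
def endR : Subring (AddMonoid.End S) where
  carrier := {e | ∀ (x : S) (r : R), e (x * ψ r) = e x * ψ r}
  mul_mem' := by
    intro a b ha hb x r
    show a (b (x * ψ r)) = a (b x) * ψ r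
    rw [hb, ha]
  one_mem' := by intro x r; rfl
  add_mem' := by
    intro a b ha hb x r
    show a (x * ψ r) + b (x * ψ r) = (a x + b x) * ψ r
    rw [ha, hb, add_mul]
  zero_mem' := by
    intro x r
    show (0 : S) = 0 * ψ r
    rw [zero_mul]
  neg_mem' := by
    intro a ha x r
    show -(a (x * ψ r)) = -(a x) * ψ r
    rw [ha, neg_mul]

/-- `End(_RS)`: additive endomorphisms of `S` commuting with the left `R`-action
(along `ψ`), as a subring of `AddMonoid.End S`. -/
def endL : Subring (AddMonoid.End S) where
  carrier := {e | ∀ (r : R) (x : S), e (ψ r * x) = ψ r * e x}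
  mul_mem' := by
    intro a b ha hb r x
    show a (b (ψ r * x)) = ψ r * a (b x)
    rw [hb, ha]
  one_mem' := by intro r x; rfl
  add_mem' := by
    intro a b ha hb r x
    show a (ψ r * x) + b (ψ r * x) = ψ r * (a x + b x)
    rw [ha, hb, mul_add]
  zero_mem' := by
    intro r x
    show (0 : S) = ψ r * 0
    rw [mul_zero]
  neg_mem' := by
    intro a ha r x
    show -(a (ψ r * x)) = ψ r * -(a x)
    rw [ha, mul_neg]

/-- The left regular representation `λ : S → End(S_R)`, `s ↦ (x ↦ s * x)`. -/
def lam : S →+* endR ψ where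
  toFun s := ⟨(AddMonoidHom.mulLeft s : S →+ S), by
    intro x r
    show s * (x * ψ r) = s * x * ψ r
    rw [mul_assoc]⟩
  map_one' := by
    apply Subtype.ext
    refine AddMonoidHom.ext fun x => ?_
    show (1 : S) * x = x
    rw [one_mul]
  map_mul' s t := by
    apply Subtype.ext
    refine AddMonoidHom.ext fun x => ?_
    show (s * t) * x = s * (t * x)
    rw [mul_assoc]
  map_zero' := by
    apply Subtype.ext
    refine AddMonoidHom.ext fun x => ?_
    show (0 : S) * x = 0
    rw [zero_mul]
  map_add' s t := by
    apply Subtype.ext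
    refine AddMonoidHom.ext fun x => ?_
    show (s + t) * x = s * x + t * x
    rw [add_mul]

/-- Right multiplication `ρ : S → End(_RS)`, `s ↦ (x ↦ x * s)`. -/
def rho (s : S) : endL ψ :=
  ⟨(AddMonoidHom.mulRight s : S →+ S), by
    intro r x
    show (ψ r * x) * s = ψ r * (x * s)
    rw [mul_assoc]⟩

/-- Left `S`-action on `End(_RS)`: `(x · f)(z) = f (z * x)`. -/
def endLL (x : S) (f : endL ψ) : endL ψ :=
  ⟨(f.1 : S →+ S).comp (AddMonoidHom.mulRight x), by
    intro r z
    show (f.1 : S →+ S) ((ψ r * z) * x) = ψ r * (f.1 : S →+ S) (z * x)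
    rw [mul_assoc]
    exact f.2 r (z * x)⟩

/-- Right `S`-action on `End(_RS)`: `(f · y)(z) = f z * y`. -/
def endLR (f : endL ψ) (y : S) : endL ψ :=
  ⟨(AddMonoidHom.mulRight y).comp (f.1 : S →+ S), by
    intro r z
    show (f.1 : S →+ S) (ψ r * z) * y = ψ r * ((f.1 : S →+ S) z * y)
    rw [f.2 r z, mul_assoc]⟩

end ExtEnd

section QF

variable {B A : Type} [Ring B] [Ring A] (φ : B →+* A)

/-- `φ : B → A` is a left QF-extension: `_B A` is finitely generated projective and `A`
divides `(_B A)* = Hom_{B-}(A,B)` as `(A,B)`-bimodules. -/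
def IsLeftQF : Prop :=
  (letI : Module B A := Module.compHom A φ
   Module.Finite B A ∧ Module.Projective B A) ∧
  BDiv A B (fun a x => a * x) (fun x b => x * φ b) (ldualL φ) (ldualR φ)

/-- `φ : B → A` is a right QF-extension: `A_B` is finitely generated projective and `A`
divides `(A_B)* = Hom_{-B}(A,B)` as `(B,A)`-bimodules. -/
def IsRightQF : Prop :=
  (letI : Module Bᵐᵒᵖ A := Module.compHom A φ.op
   Module.Finite Bᵐᵒᵖ A ∧ Module.Projective Bᵐᵒᵖ A) ∧
  BDiv B A (fun b x => φ b * x) (fun x a => x * a) (rdualL φ) (rdualR φ)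

/-- `φ : B → A` is a QF extension: both a left and a right QF extension. -/
def IsQFExt : Prop := IsLeftQF φ ∧ IsRightQF φ

end QF

/-! The whole argument runs on dual bases. If `(xᵢ, ξᵢ)` is a dual basis of `_BA`, every
`h ∈ *A` expands as `h = Σ ξᵢ · h(xᵢ)`, so evaluation at the `xᵢ` identifies `(*A)*` with `A`;
symmetrically a dual basis `(yᵢ, ηᵢ)` of `A_B` identifies `*(A*)` with `A`. Dualizing a splitting
`*A ∣ A` with `Hom_{-B}(-, B)` therefore gives `A ∣ A*`, and dualizing `A ∣ A*` with
`Hom_{B-}(-, B)` gives `*A ∣ A`. Finally `A ∣ *A` exhibits `A_B` as a summand of a power of `*A`,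
and `*A_B` inherits a dual basis `(ξᵢ, evaluation at xᵢ)`, so `A_B` is finitely generated
projective. -/

open Finset

section Divisibility

variable {L R M N : Type} [AddCommGroup M] [AddCommGroup N]

def IsBimodHom (lM : L → M → M) (rM : M → R → M) (lN : L → N → N) (rN : N → R → N)
    (f : M →+ N) : Prop :=
  (∀ l m, f (lM l m) = lN l (f m)) ∧ ∀ m r, f (rM m r) = rN (f m) r

variable {lM : L → M → M} {rM : M → R → M} {lN : L → N → N} {rN : N → R → N}

theorem BDiv.exists_bimodHom_sum (hl : ∀ l, lN l 0 = 0) (hr : ∀ r, rN 0 r = 0)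
    (h : BDiv L R lM rM lN rN) :
    ∃ (n : ℕ) (f : Fin n → M →+ N) (g : Fin n → N →+ M),
      (∀ i, IsBimodHom lM rM lN rN (f i)) ∧ (∀ i, IsBimodHom lN rN lM rM (g i)) ∧
      ∀ m, ∑ i, g i (f i m) = m := by
  obtain ⟨n, f, g, hfl, hfr, hgl, hgr, hgf⟩ := h
  refine ⟨n, fun i => (Pi.evalAddMonoidHom (fun _ => N) i).comp f,
    fun i => g.comp (AddMonoidHom.single (fun _ => N) i), fun i => ⟨fun l m => ?_, fun m r => ?_⟩,
    fun i => ⟨fun l v => ?_, fun v r => ?_⟩, fun m => ?_⟩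
  · simp [hfl]
  · simp [hfr]
  · simp only [AddMonoidHom.coe_comp, Function.comp_apply, AddMonoidHom.single_apply, ← hgl]
    congr 1
    funext j
    exact (Pi.apply_single (fun _ => lN l) (fun _ => hl l) i v j).symm
  · simp only [AddMonoidHom.coe_comp, Function.comp_apply, AddMonoidHom.single_apply, ← hgr]
    congr 1
    funext j
    exact (Pi.apply_single (fun _ x => rN x r) (fun _ => hr r) i v j).symm
  · simp only [AddMonoidHom.coe_comp, Function.comp_apply, AddMonoidHom.single_apply,
      Pi.evalAddMonoidHom_apply, ← map_sum, univ_sum_single, hgf]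

theorem BDiv.of_bimodHom_sum (hl : ∀ l (m m' : M), lM l (m + m') = lM l m + lM l m')
    (hr : ∀ (m m' : M) r, rM (m + m') r = rM m r + rM m' r) {n : ℕ} {f : Fin n → M →+ N}
    {g : Fin n → N →+ M} (hf : ∀ i, IsBimodHom lM rM lN rN (f i))
    (hg : ∀ i, IsBimodHom lN rN lM rM (g i)) (hgf : ∀ m, ∑ i, g i (f i m) = m) :
    BDiv L R lM rM lN rN := by
  refine ⟨n, AddMonoidHom.pi f, ∑ i, (g i).comp (Pi.evalAddMonoidHom _ i),
    fun l m => funext fun i => (hf i).1 l m, fun m r => funext fun i => (hf i).2 m r,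
    fun l v => ?_, fun v r => ?_, fun m => ?_⟩
  · simp only [AddMonoidHom.finsetSum_apply, AddMonoidHom.coe_comp, Function.comp_apply,
      Pi.evalAddMonoidHom_apply, (hg _).1]
    exact (map_sum (AddMonoidHom.mk' (lM l) (hl l)) _ _).symm
  · simp only [AddMonoidHom.finsetSum_apply, AddMonoidHom.coe_comp, Function.comp_apply,
      Pi.evalAddMonoidHom_apply, (hg _).2]
    exact (map_sum (AddMonoidHom.mk' (rM · r) (hr · · r)) _ _).symm
  · simpa using hgf m

end Divisibility

theorem Module.exists_dualBasis_of_finite_of_projective (R M : Type*) [Ring R] [AddCommGroup M]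
    [Module R M] [Module.Finite R M] [Module.Projective R M] :
    ∃ (n : ℕ) (x : Fin n → M) (f : Fin n → M →ₗ[R] R), ∀ z, ∑ i, f i z • x i = z := by
  obtain ⟨n, s, c, -, -, hsc⟩ := Module.Finite.exists_comp_eq_id_of_projective R M
  refine ⟨n, fun i => s (Pi.single i 1), fun i => (LinearMap.proj i).comp c, fun z => ?_⟩
  conv_rhs => rw [← LinearMap.id_apply (R := R) z, ← hsc]
  simp only [LinearMap.coe_comp, Function.comp_apply, LinearMap.coe_proj, Function.eval,
    ← map_smul, ← map_sum]
  congr 1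
  ext j
  simp [Finset.sum_apply, Pi.single_apply]

theorem Module.finite_and_projective_of_dualBasis {R M ι : Type*} [Ring R] [AddCommGroup M]
    [Module R M] [Fintype ι] (x : ι → M) (f : ι → M →ₗ[R] R) (h : ∀ z, ∑ i, f i z • x i = z) :
    Module.Finite R M ∧ Module.Projective R M := by
  let s : (ι → R) →ₗ[R] M := ∑ i, (LinearMap.proj i).smulRight (x i)
  have hsc : s ∘ₗ LinearMap.pi f = LinearMap.id := by
    ext z
    simp [s, h z]
  have hs : Function.Surjective s := fun z => ⟨LinearMap.pi f z, LinearMap.congr_fun hsc z⟩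
  exact ⟨Module.Finite.of_surjective s hs, Module.Projective.of_split _ s hsc⟩

section DualBasis

variable {B A : Type} [Ring B] [Ring A] (φ : B →+* A) {ι : Type} [Fintype ι]

def IsLeftDualBasis (x : ι → A) (ξ : ι → ldualSub φ) : Prop :=
  ∀ z, ∑ i, φ ((ξ i).1 z) * x i = z

def IsRightDualBasis (y : ι → A) (η : ι → rdualSub φ) : Prop :=
  ∀ z, ∑ i, y i * φ ((η i).1 z) = z

variable {φ}

@[ext] theorem ldualSub_ext {h k : ldualSub φ} (H : ∀ z, h.1 z = k.1 z) : h = k :=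
  Subtype.ext (AddMonoidHom.ext H)

@[ext] theorem rdualSub_ext {h k : rdualSub φ} (H : ∀ z, h.1 z = k.1 z) : h = k :=
  Subtype.ext (AddMonoidHom.ext H)

@[simp] theorem ldualL_apply (a : A) (h : ldualSub φ) (z : A) :
    (ldualL φ a h).1 z = h.1 (z * a) := rfl

@[simp] theorem ldualR_apply (h : ldualSub φ) (b : B) (z : A) :
    (ldualR φ h b).1 z = h.1 z * b := rfl

@[simp] theorem rdualL_apply (b : B) (h : rdualSub φ) (z : A) :
    (rdualL φ b h).1 z = b * h.1 z := rfl

@[simp] theorem rdualR_apply (h : rdualSub φ) (a : A) (z : A) :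
    (rdualR φ h a).1 z = h.1 (a * z) := rfl

theorem ldualL_zero (a : A) : ldualL φ a 0 = 0 := by ext; rfl

theorem ldualR_zero (b : B) : ldualR φ 0 b = 0 := by ext; simp

theorem rdualL_zero (b : B) : rdualL φ b 0 = 0 := by ext; simp

theorem rdualR_zero (a : A) : rdualR φ 0 a = 0 := by ext; rfl

theorem ldualL_add (a : A) (h k : ldualSub φ) :
    ldualL φ a (h + k) = ldualL φ a h + ldualL φ a k := by ext; rfl

theorem ldualR_add (h k : ldualSub φ) (b : B) :
    ldualR φ (h + k) b = ldualR φ h b + ldualR φ k b := by ext; simp [add_mul]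

theorem exists_isLeftDualBasis
    (h : letI : Module B A := Module.compHom A φ
      Module.Finite B A ∧ Module.Projective B A) :
    ∃ (n : ℕ) (x : Fin n → A) (ξ : Fin n → ldualSub φ), IsLeftDualBasis φ x ξ := by
  let : Module B A := Module.compHom A φ
  obtain ⟨_, _⟩ := h
  obtain ⟨n, x, f, hf⟩ := Module.exists_dualBasis_of_finite_of_projective B A
  exact ⟨n, x, fun i => ⟨(f i).toAddMonoidHom, (f i).map_smul⟩, hf⟩

theorem exists_isRightDualBasis
    (h : letI : Module Bᵐᵒᵖ A := Module.compHom A φ.op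
      Module.Finite Bᵐᵒᵖ A ∧ Module.Projective Bᵐᵒᵖ A) :
    ∃ (n : ℕ) (y : Fin n → A) (η : Fin n → rdualSub φ), IsRightDualBasis φ y η := by
  let : Module Bᵐᵒᵖ A := Module.compHom A φ.op
  obtain ⟨_, _⟩ := h
  obtain ⟨n, y, f, hf⟩ := Module.exists_dualBasis_of_finite_of_projective Bᵐᵒᵖ A
  refine ⟨n, y, fun i => ⟨AddMonoidHom.mk' (fun z => (f i z).unop) (fun z w => by simp),
    fun z b => congrArg MulOpposite.unop ((f i).map_smul (MulOpposite.op b) z)⟩, hf⟩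

theorem rightFGP_of_isRightDualBasis {y : ι → A} {η : ι → rdualSub φ}
    (hy : IsRightDualBasis φ y η) :
    letI : Module Bᵐᵒᵖ A := Module.compHom A φ.op
    Module.Finite Bᵐᵒᵖ A ∧ Module.Projective Bᵐᵒᵖ A :=
  letI : Module Bᵐᵒᵖ A := Module.compHom A φ.op
  Module.finite_and_projective_of_dualBasis y
    (fun i => { toFun := fun z => MulOpposite.op ((η i).1 z)
                map_add' := fun z w => by simp
                map_smul' := fun b z => congrArg MulOpposite.op ((η i).2 z b.unop) }) hy

end DualBasis

section Duality

variable {B A : Type} [Ring B] [Ring A] {φ : B →+* A} {ι : Type} [Fintype ι]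

theorem ldual_eq_sum {x : ι → A} {ξ : ι → ldualSub φ} (hx : IsLeftDualBasis φ x ξ)
    (h : ldualSub φ) : h = ∑ i, ldualR φ (ξ i) (h.1 (x i)) := by
  ext z
  conv_lhs => rw [← hx z]
  simp only [map_sum, AddSubgroup.val_finsetSum, AddMonoidHom.finsetSum_apply, ldualR_apply]
  exact sum_congr rfl fun i _ => h.2 _ _

theorem rdual_eq_sum {y : ι → A} {η : ι → rdualSub φ} (hy : IsRightDualBasis φ y η)
    (t : rdualSub φ) : t = ∑ i, rdualL φ (t.1 (y i)) (η i) := by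
  ext z
  conv_lhs => rw [← hy z]
  simp only [map_sum, AddSubgroup.val_finsetSum, AddMonoidHom.finsetSum_apply, rdualL_apply]
  exact sum_congr rfl fun i _ => t.2 _ _

theorem map_ldual_eq_sum {x : ι → A} {ξ : ι → ldualSub φ} (hx : IsLeftDualBasis φ x ξ)
    (u : ldualSub φ →+ B) (hu : ∀ h b, u (ldualR φ h b) = u h * b) (h : ldualSub φ) :
    u h = ∑ i, u (ξ i) * h.1 (x i) := by
  conv_lhs => rw [ldual_eq_sum hx h]
  simp only [map_sum, hu]

theorem map_rdual_eq_sum {y : ι → A} {η : ι → rdualSub φ} (hy : IsRightDualBasis φ y η)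
    (u : rdualSub φ →+ B) (hu : ∀ b t, u (rdualL φ b t) = b * u t) (t : rdualSub φ) :
    u t = ∑ i, t.1 (y i) * u (η i) := by
  conv_lhs => rw [rdual_eq_sum hy t]
  simp only [map_sum, hu]

theorem sum_map_ldualL_mul {x : ι → A} {ξ : ι → ldualSub φ} (hx : IsLeftDualBasis φ x ξ)
    (u : ldualSub φ →+ B) (hu : ∀ h b, u (ldualR φ h b) = u h * b) (a : A) :
    ∑ i, φ (u (ldualL φ a (ξ i))) * x i = (∑ i, φ (u (ξ i)) * x i) * a :=
  calc ∑ i, φ (u (ldualL φ a (ξ i))) * x i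
      = ∑ k, φ (u (ξ k)) * ∑ i, φ ((ξ i).1 (x k * a)) * x i := by
        simp only [map_ldual_eq_sum hx u hu (ldualL φ a _), ldualL_apply, map_sum, map_mul,
          sum_mul, mul_sum, mul_assoc]
        exact sum_comm
    _ = (∑ k, φ (u (ξ k)) * x k) * a := by
        rw [sum_mul]
        exact sum_congr rfl fun k _ => by rw [hx (x k * a), mul_assoc]

theorem sum_mul_map_rdualR {y : ι → A} {η : ι → rdualSub φ} (hy : IsRightDualBasis φ y η)
    (u : rdualSub φ →+ B) (hu : ∀ b t, u (rdualL φ b t) = b * u t) (a : A) :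
    ∑ i, y i * φ (u (rdualR φ (η i) a)) = a * ∑ i, y i * φ (u (η i)) :=
  calc ∑ i, y i * φ (u (rdualR φ (η i) a))
      = ∑ k, (∑ i, y i * φ ((η i).1 (a * y k))) * φ (u (η k)) := by
        simp only [map_rdual_eq_sum hy u hu (rdualR φ _ a), rdualR_apply, map_sum, map_mul,
          sum_mul, mul_sum, mul_assoc]
        exact sum_comm
    _ = a * ∑ k, y k * φ (u (η k)) := by
        rw [mul_sum]
        exact sum_congr rfl fun k _ => by rw [hy (a * y k), mul_assoc]

theorem ldualSub_comp_map_rdualL (h : ldualSub φ) {g : rdualSub φ →+ A}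
    (hg : ∀ b t, g (rdualL φ b t) = φ b * g t) (b : B) (t : rdualSub φ) :
    h.1.comp g (rdualL φ b t) = b * h.1.comp g t := by
  simp only [AddMonoidHom.coe_comp, Function.comp_apply, hg]
  exact h.2 b (g t)

theorem rdualSub_comp_map_ldualR (t : rdualSub φ) {f : ldualSub φ →+ A}
    (hf : ∀ h b, f (ldualR φ h b) = f h * φ b) (h : ldualSub φ) (b : B) :
    t.1.comp f (ldualR φ h b) = t.1.comp f h * b := by
  simp only [AddMonoidHom.coe_comp, Function.comp_apply, hf]
  exact t.2 (f h) b

/-- A `(B, A)`-bilinear `f : A → A*` is a balanced form `⟨w, z⟩ = (f w) z`; read in its other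
argument it becomes a map `A → *A`. -/
def ldualTranspose (f : A →+ rdualSub φ) (hf : ∀ b w, f (φ b * w) = rdualL φ b (f w)) :
    A →+ ldualSub φ where
  toFun z := ⟨(AddMonoidHom.eval z).comp ((rdualSub φ).subtype.comp f), fun b w => by simp [hf]⟩
  map_zero' := by ext; simp
  map_add' z z' := by ext; simp

def rdualTranspose (g : A →+ ldualSub φ) (hg : ∀ z b, g (z * φ b) = ldualR φ (g z) b) :
    A →+ rdualSub φ where
  toFun a := ⟨(AddMonoidHom.eval a).comp ((ldualSub φ).subtype.comp g), fun z b => by simp [hg]⟩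
  map_zero' := by ext; simp
  map_add' a a' := by ext; simp

@[simp] theorem ldualTranspose_apply (f : A →+ rdualSub φ)
    (hf : ∀ b w, f (φ b * w) = rdualL φ b (f w)) (z w : A) :
    (ldualTranspose f hf z).1 w = (f w).1 z := rfl

@[simp] theorem rdualTranspose_apply (g : A →+ ldualSub φ)
    (hg : ∀ z b, g (z * φ b) = ldualR φ (g z) b) (a w : A) :
    (rdualTranspose g hg a).1 w = (g w).1 a := rfl

theorem isBimodHom_ldualTranspose (f : A →+ rdualSub φ)
    (hf : ∀ b w, f (φ b * w) = rdualL φ b (f w)) (hf' : ∀ w a, f (w * a) = rdualR φ (f w) a) :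
    IsBimodHom (fun a x => a * x) (fun x b => x * φ b) (ldualL φ) (ldualR φ)
      (ldualTranspose f hf) :=
  ⟨fun a z => by ext w; simp [hf'], fun z b => by ext w; exact (f w).2 z b⟩

theorem isBimodHom_rdualTranspose (g : A →+ ldualSub φ)
    (hg : ∀ z b, g (z * φ b) = ldualR φ (g z) b) (hg' : ∀ a z, g (a * z) = ldualL φ a (g z)) :
    IsBimodHom (fun b x => φ b * x) (fun x a => x * a) (rdualL φ) (rdualR φ)
      (rdualTranspose g hg) :=
  ⟨fun b a => by ext w; exact (g w).2 b a, fun a a' => by ext w; simp [hg']⟩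

/-- The map `*A → A` induced by `g : A* → A`, through `*(A*) ≅ A` given by a dual basis of `A_B`. -/
def ldualToSelf (y : ι → A) (η : ι → rdualSub φ) (g : rdualSub φ →+ A) : ldualSub φ →+ A where
  toFun h := ∑ i, y i * φ (h.1 (g (η i)))
  map_zero' := by simp
  map_add' h k := by simp [mul_add, sum_add_distrib]

/-- The map `A* → A` induced by `f : *A → A`, through `(*A)* ≅ A` given by a dual basis of `_BA`. -/
def rdualToSelf (x : ι → A) (ξ : ι → ldualSub φ) (f : ldualSub φ →+ A) : rdualSub φ →+ A where
  toFun t := ∑ i, φ (t.1 (f (ξ i))) * x i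
  map_zero' := by simp
  map_add' t s := by simp [add_mul, sum_add_distrib]

theorem isBimodHom_ldualToSelf {y : ι → A} {η : ι → rdualSub φ} (hy : IsRightDualBasis φ y η)
    {g : rdualSub φ →+ A}
    (hg : IsBimodHom (rdualL φ) (rdualR φ) (fun b x => φ b * x) (fun x a => x * a) g) :
    IsBimodHom (ldualL φ) (ldualR φ) (fun a x => a * x) (fun x b => x * φ b)
      (ldualToSelf y η g) := by
  refine ⟨fun a h => ?_, fun h b => ?_⟩
  · simpa [ldualToSelf, ← hg.2] using
      sum_mul_map_rdualR hy (h.1.comp g) (ldualSub_comp_map_rdualL h hg.1) a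
  · simp [ldualToSelf, sum_mul, mul_assoc]

theorem isBimodHom_rdualToSelf {x : ι → A} {ξ : ι → ldualSub φ} (hx : IsLeftDualBasis φ x ξ)
    {f : ldualSub φ →+ A}
    (hf : IsBimodHom (ldualL φ) (ldualR φ) (fun a x => a * x) (fun x b => x * φ b) f) :
    IsBimodHom (rdualL φ) (rdualR φ) (fun b x => φ b * x) (fun x a => x * a)
      (rdualToSelf x ξ f) := by
  refine ⟨fun b t => ?_, fun t a => ?_⟩
  · simp [rdualToSelf, mul_sum, mul_assoc]
  · simpa [rdualToSelf, ← hf.1] using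
      sum_map_ldualL_mul hx (t.1.comp f) (rdualSub_comp_map_ldualR t hf.2) a

theorem ldualTranspose_ldualToSelf_apply {y : ι → A} {η : ι → rdualSub φ}
    (hy : IsRightDualBasis φ y η) (f : A →+ rdualSub φ)
    (hf : ∀ b w, f (φ b * w) = rdualL φ b (f w)) {g : rdualSub φ →+ A}
    (hg : ∀ b t, g (rdualL φ b t) = φ b * g t) (h : ldualSub φ) (w : A) :
    (ldualTranspose f hf (ldualToSelf y η g h)).1 w = h.1 (g (f w)) := by
  refine Eq.trans ?_ (map_rdual_eq_sum hy (h.1.comp g) (ldualSub_comp_map_rdualL h hg) (f w)).symm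
  rw [ldualTranspose_apply]
  simp only [ldualToSelf, AddMonoidHom.coe_mk, ZeroHom.coe_mk, map_sum, AddMonoidHom.coe_comp,
    Function.comp_apply]
  exact sum_congr rfl fun i _ => (f w).2 (y i) _

end Duality

section QFDivisibility

variable {B A : Type} [Ring B] [Ring A] {φ : B →+* A} {ι : Type} [Fintype ι]

theorem bdiv_ldual_self_of_bdiv_self_rdual {y : ι → A} {η : ι → rdualSub φ}
    (hy : IsRightDualBasis φ y η)
    (h : BDiv B A (fun b x => φ b * x) (fun x a => x * a) (rdualL φ) (rdualR φ)) :
    BDiv A B (ldualL φ) (ldualR φ) (fun a x => a * x) (fun x b => x * φ b) := by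
  obtain ⟨n, f, g, hf, hg, hgf⟩ := h.exists_bimodHom_sum rdualL_zero rdualR_zero
  refine BDiv.of_bimodHom_sum ldualL_add ldualR_add
    (fun i => isBimodHom_ldualToSelf hy (hg i))
    (fun i => isBimodHom_ldualTranspose (f i) (hf i).1 (hf i).2) fun h => ?_
  ext w
  simp only [AddSubgroup.val_finsetSum, AddMonoidHom.finsetSum_apply,
    ldualTranspose_ldualToSelf_apply hy _ _ (hg _).1, ← map_sum, hgf]

theorem bdiv_self_rdual_of_bdiv_ldual_self {x : ι → A} {ξ : ι → ldualSub φ}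
    (hx : IsLeftDualBasis φ x ξ)
    (h : BDiv A B (ldualL φ) (ldualR φ) (fun a x => a * x) (fun x b => x * φ b)) :
    BDiv B A (fun b x => φ b * x) (fun x a => x * a) (rdualL φ) (rdualR φ) := by
  obtain ⟨n, f, g, hf, hg, hgf⟩ :=
    h.exists_bimodHom_sum (fun _ => mul_zero _) (fun _ => zero_mul _)
  refine BDiv.of_bimodHom_sum (fun _ _ _ => mul_add _ _ _) (fun _ _ _ => add_mul _ _ _)
    (fun i => isBimodHom_rdualTranspose (g i) (hg i).2 (hg i).1)
    (fun i => isBimodHom_rdualToSelf hx (hf i)) fun a => ?_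
  calc ∑ i, rdualToSelf x ξ (f i) (rdualTranspose (g i) (hg i).2 a)
      = ∑ k, φ ((∑ i, g i (f i (ξ k))).1 a) * x k := by
        simp only [rdualToSelf, AddMonoidHom.coe_mk, ZeroHom.coe_mk, rdualTranspose_apply,
          AddSubgroup.val_finsetSum, AddMonoidHom.finsetSum_apply, map_sum, sum_mul]
        exact sum_comm
    _ = a := by simpa only [hgf] using hx a

theorem rightFGP_of_bdiv_self_ldual {x : ι → A} {ξ : ι → ldualSub φ} (hx : IsLeftDualBasis φ x ξ)
    (h : BDiv A B (fun a x => a * x) (fun x b => x * φ b) (ldualL φ) (ldualR φ)) :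
    letI : Module Bᵐᵒᵖ A := Module.compHom A φ.op
    Module.Finite Bᵐᵒᵖ A ∧ Module.Projective Bᵐᵒᵖ A := by
  obtain ⟨n, f, g, hf, hg, hgf⟩ := h.exists_bimodHom_sum ldualL_zero ldualR_zero
  refine rightFGP_of_isRightDualBasis (y := fun p : Fin n × ι => g p.1 (ξ p.2))
    (η := fun p => rdualTranspose (f p.1) (hf p.1).2 (x p.2)) fun z => ?_
  rw [Fintype.sum_prod_type]
  conv_rhs => rw [← hgf z]
  refine sum_congr rfl fun i _ => ?_
  conv_rhs => rw [ldual_eq_sum hx (f i z), map_sum]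
  simp [(hg i).2]

end QFDivisibility

/-- A ring extension `B → A` is a QF extension (left and right QF) if and only if `_B A`
is finitely generated projective and `A ∼ (_B A)* = Hom_{B-}(A, B)` as `(A,B)`-bimodules. -/
theorem qf_iff_similar_leftDual {B A : Type} [Ring B] [Ring A] (φ : B →+* A) :
    IsQFExt φ ↔
      ((letI : Module B A := Module.compHom A φ
        Module.Finite B A ∧ Module.Projective B A) ∧
       BSim A B (fun a x => a * x) (fun x b => x * φ b) (ldualL φ) (ldualR φ)) := by
  constructor
  · rintro ⟨⟨hfgp, hdiv⟩, hfgpR, hdivR⟩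
    obtain ⟨_, y, η, hy⟩ := exists_isRightDualBasis hfgpR
    exact ⟨hfgp, hdiv, bdiv_ldual_self_of_bdiv_self_rdual hy hdivR⟩
  · rintro ⟨hfgp, hdiv, hdiv'⟩
    obtain ⟨_, x, ξ, hx⟩ := exists_isLeftDualBasis hfgp
    exact ⟨⟨hfgp, hdiv⟩, rightFGP_of_bdiv_self_ldual hx hdiv,
      bdiv_self_rdual_of_bdiv_ldual_self hx hdiv'⟩
end
end

section
/- If A/B is a separable extension, then the natural (E, E)-bimodule epimorphism E ⊗_B E → E ⊗_A E (induced by the canonical surjection) splits as a map of (E, E)-bimodules via x ⊗_A y ↦ x e¹ ⊗_B e² y, where e = e¹ ⊗ e² is a separability element; hence E ⊗_A E divides E ⊗_B E as (E, E)-bimodules, where E = End(A_B) and A → E is the left regular representation. -/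
/-!
Nothing about `E = End(A_B)` matters beyond the ring map `ι : A → E`. The image `ε` of a
separability element `e` in `E ⊗_B E` still commutes with `ι(A)`, which is exactly what makes
`x ⊗_A y ↦ x ε¹ ⊗_B ε² y` well defined; it is visibly `(E, E)`-bilinear, and followed by the
projection it sends `x ⊗ y` to `x ⊗_A e¹e² y = x ⊗ y`. A bimodule map with a bimodule
retraction exhibits a direct summand.
-/

open scoped TensorProduct

noncomputable section

section Separable

variable {B A : Type} [Ring B] [Ring A] (φ : B →+* A)

/-- `A/B` is a separable extension: there is a separability element
`e ∈ A ⊗_B A` with `e¹ e² = 1` and `a · e = e · a` for all `a`. -/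
def IsSepExt : Prop :=
  ∃ e : TensorSq φ, tmul' φ e = 1 ∧ ∀ a : A, tL φ a e = tR φ a e

/-- The canonical `(E,E)`-bimodule epimorphism `E ⊗_B E → E ⊗_A E`, where
`E = End(A_B)` and `A → E` is the left regular representation. -/
def towerProj : TensorSq ((lam φ).comp φ) →+ TensorSq (lam φ) :=
  QuotientAddGroup.map _ _ (AddMonoidHom.id _)
    (by
      show tensorRel ((lam φ).comp φ) ≤ AddSubgroup.comap _ (tensorRel (lam φ))
      rw [tensorRel, AddSubgroup.closure_le]
      rintro z ⟨x, y, b, rfl⟩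
      simp only [SetLike.mem_coe, AddSubgroup.mem_comap, AddMonoidHom.id_apply]
      exact AddSubgroup.subset_closure ⟨x, y, φ b, by simp [RingHom.comp_apply]⟩)

end Separable

section TensorSq

variable {R S : Type} [Ring R] [Ring S] (ψ : R →+* S)

theorem tmk_add_left (x x' y : S) : tmk ψ (x + x') y = tmk ψ x y + tmk ψ x' y := by
  rw [tmk, TensorProduct.add_tmul, QuotientAddGroup.mk_add]; rfl

theorem tmk_add_right (x y y' : S) : tmk ψ x (y + y') = tmk ψ x y + tmk ψ x y' := by
  rw [tmk, TensorProduct.tmul_add, QuotientAddGroup.mk_add]; rfl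

theorem tmk_zero_right (x : S) : tmk ψ x 0 = 0 := by
  rw [tmk, TensorProduct.tmul_zero]; rfl

theorem tmk_mul_map (x y : S) (r : R) : tmk ψ (x * ψ r) y = tmk ψ x (ψ r * y) :=
  QuotientAddGroup.eq_iff_sub_mem.2 (AddSubgroup.subset_closure ⟨x, y, r, rfl⟩)

@[elab_as_elim]
theorem TensorSq.induction_on {p : TensorSq ψ → Prop} (t : TensorSq ψ) (zero : p 0)
    (tmk : ∀ x y, p (tmk ψ x y)) (add : ∀ u v, p u → p v → p (u + v)) : p t := by
  obtain ⟨w, rfl⟩ := QuotientAddGroup.mk_surjective t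
  induction w using TensorProduct.induction_on with
  | zero => exact zero
  | tmul x y => exact tmk x y
  | add u v hu hv => exact add _ _ hu hv

theorem TensorSq.addHom_ext {T : Type} [AddCommGroup T] {f g : TensorSq ψ →+ T}
    (h : ∀ x y, f (tmk ψ x y) = g (tmk ψ x y)) : f = g :=
  AddMonoidHom.ext fun t => TensorSq.induction_on ψ t (by simp only [map_zero]) h
    fun u v hu hv => by simp only [map_add, hu, hv]

theorem tL_tmk (a x y : S) : tL ψ a (tmk ψ x y) = tmk ψ (a * x) y := rfl

theorem tR_tmk (a x y : S) : tR ψ a (tmk ψ x y) = tmk ψ x (y * a) := rfl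

theorem tmul'_tmk (x y : S) : tmul' ψ (tmk ψ x y) = x * y := rfl

theorem tL_add (a b : S) : tL ψ (a + b) = tL ψ a + tL ψ b :=
  TensorSq.addHom_ext ψ fun x y => by simp only [tL_tmk, add_mul, tmk_add_left]; rfl

theorem tR_add (a b : S) : tR ψ (a + b) = tR ψ a + tR ψ b :=
  TensorSq.addHom_ext ψ fun x y => by simp only [tR_tmk, mul_add, tmk_add_right]; rfl

theorem tL_mul (a b : S) : tL ψ (a * b) = (tL ψ a).comp (tL ψ b) :=
  TensorSq.addHom_ext ψ fun x y => by simp only [tL_tmk, AddMonoidHom.comp_apply, mul_assoc]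

theorem tR_mul (a b : S) : tR ψ (a * b) = (tR ψ b).comp (tR ψ a) :=
  TensorSq.addHom_ext ψ fun x y => by simp only [tR_tmk, AddMonoidHom.comp_apply, mul_assoc]

theorem tL_tR_comm (a b : S) (t : TensorSq ψ) : tL ψ a (tR ψ b t) = tR ψ b (tL ψ a t) :=
  DFunLike.congr_fun (f := (tL ψ a).comp (tR ψ b)) (g := (tR ψ b).comp (tL ψ a))
    (TensorSq.addHom_ext ψ fun _ _ => rfl) t

def TensorSq.lift {T : Type} [AddCommGroup T] (f : S → S → T)
    (hl : ∀ x x' y, f (x + x') y = f x y + f x' y) (hr : ∀ x y y', f x (y + y') = f x y + f x y')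
    (hf : ∀ x y r, f (x * ψ r) y = f x (ψ r * y)) : TensorSq ψ →+ T :=
  QuotientAddGroup.lift _
    (TensorProduct.liftAddHom
      (AddMonoidHom.mk' (fun x => AddMonoidHom.mk' (f x) (hr x)) fun x x' =>
        AddMonoidHom.ext (hl x x'))
      fun n x y => by simp only [map_zsmul, AddMonoidHom.smul_apply])
    ((AddSubgroup.closure_le _).2 <| by
      rintro _ ⟨x, y, r, rfl⟩
      simp [hf])

end TensorSq

namespace TensorSq

variable {B A E : Type} [Ring B] [Ring A] [Ring E] (φ : B →+* A) (ι : A →+* E)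

def map : TensorSq φ →+ TensorSq (ι.comp φ) :=
  lift φ (fun u v => tmk _ (ι u) (ι v))
    (fun u u' v => by simp only [map_add, tmk_add_left])
    (fun u v v' => by simp only [map_add, tmk_add_right])
    (fun u v b => by simp only [map_mul]; exact tmk_mul_map (ι.comp φ) (ι u) (ι v) b)

theorem map_tmk (u v : A) : map φ ι (tmk φ u v) = tmk _ (ι u) (ι v) := rfl

theorem map_tL (a : A) (z : TensorSq φ) : map φ ι (tL φ a z) = tL _ (ι a) (map φ ι z) :=
  DFunLike.congr_fun (f := (map φ ι).comp (tL φ a)) (g := (tL _ (ι a)).comp (map φ ι))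
    (addHom_ext φ fun u v => by simp only [AddMonoidHom.comp_apply, tL_tmk, map_tmk, map_mul]) z

theorem map_tR (a : A) (z : TensorSq φ) : map φ ι (tR φ a z) = tR _ (ι a) (map φ ι z) :=
  DFunLike.congr_fun (f := (map φ ι).comp (tR φ a)) (g := (tR _ (ι a)).comp (map φ ι))
    (addHom_ext φ fun u v => by simp only [AddMonoidHom.comp_apply, tR_tmk, map_tmk, map_mul]) z

def towerMap : TensorSq (ι.comp φ) →+ TensorSq ι :=
  lift _ (tmk ι) (tmk_add_left ι) (tmk_add_right ι) fun x y b => tmk_mul_map ι x y (φ b)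

theorem towerMap_tmk (x y : E) : towerMap φ ι (tmk _ x y) = tmk ι x y := rfl

theorem towerMap_tL (g : E) (t : TensorSq (ι.comp φ)) :
    towerMap φ ι (tL _ g t) = tL ι g (towerMap φ ι t) :=
  DFunLike.congr_fun (f := (towerMap φ ι).comp (tL _ g)) (g := (tL ι g).comp (towerMap φ ι))
    (addHom_ext _ fun _ _ => rfl) t

theorem towerMap_tR (g : E) (t : TensorSq (ι.comp φ)) :
    towerMap φ ι (tR _ g t) = tR ι g (towerMap φ ι t) :=
  DFunLike.congr_fun (f := (towerMap φ ι).comp (tR _ g)) (g := (tR ι g).comp (towerMap φ ι))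
    (addHom_ext _ fun _ _ => rfl) t

theorem towerMap_map (z : TensorSq φ) : towerMap φ ι (map φ ι z) = tmk ι 1 (ι (tmul' φ z)) := by
  induction z using induction_on with
  | zero => simp only [map_zero, tmk_zero_right]
  | tmk u v => rw [map_tmk, towerMap_tmk, tmul'_tmk, map_mul, ← tmk_mul_map, one_mul]
  | add u v hu hv => simp only [map_add, hu, hv, tmk_add_right]

variable {φ ι}

def splitting (ε : TensorSq (ι.comp φ)) (hε : ∀ a, tL _ (ι a) ε = tR _ (ι a) ε) :
    TensorSq ι →+ TensorSq (ι.comp φ) :=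
  lift ι (fun x y => tL _ x (tR _ y ε))
    (fun x x' y => by rw [tL_add]; rfl)
    (fun x y y' => by rw [tR_add, AddMonoidHom.add_apply, map_add])
    (fun x y a => by
      simp only [tL_mul, tR_mul, AddMonoidHom.comp_apply, ← hε a, tL_tR_comm])

variable {ε : TensorSq (ι.comp φ)} (hε : ∀ a, tL _ (ι a) ε = tR _ (ι a) ε)
include hε

theorem splitting_tmk (x y : E) : splitting ε hε (tmk ι x y) = tL _ x (tR _ y ε) := rfl

theorem splitting_tL (g : E) (t : TensorSq ι) :
    splitting ε hε (tL ι g t) = tL _ g (splitting ε hε t) :=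
  DFunLike.congr_fun (f := (splitting ε hε).comp (tL ι g)) (g := (tL _ g).comp (splitting ε hε))
    (addHom_ext ι fun x y => by
      simp only [AddMonoidHom.comp_apply, tL_tmk, splitting_tmk, tL_mul]) t

theorem splitting_tR (g : E) (t : TensorSq ι) :
    splitting ε hε (tR ι g t) = tR _ g (splitting ε hε t) :=
  DFunLike.congr_fun (f := (splitting ε hε).comp (tR ι g)) (g := (tR _ g).comp (splitting ε hε))
    (addHom_ext ι fun x y => by
      simp only [AddMonoidHom.comp_apply, tR_tmk, splitting_tmk, tR_mul, tL_tR_comm]) t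

theorem towerMap_splitting (h : towerMap φ ι ε = tmk ι 1 1) (t : TensorSq ι) :
    towerMap φ ι (splitting ε hε t) = t := by
  refine DFunLike.congr_fun (f := (towerMap φ ι).comp (splitting ε hε)) (g := .id _)
    (addHom_ext ι fun x y => ?_) t
  simp only [AddMonoidHom.comp_apply, splitting_tmk, towerMap_tL, towerMap_tR, h, tR_tmk, tL_tmk,
    mul_one, one_mul, AddMonoidHom.id_apply]

end TensorSq

theorem BDiv.of_leftInverse {L R M N : Type} [Ring L] [Ring R] [AddCommGroup M]
    [AddCommGroup N] {lM : L → M → M} {rM : M → R → M} {lN : L → N → N} {rN : N → R → N}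
    (σ : M →+ N) (π : N →+ M) (hσl : ∀ l m, σ (lM l m) = lN l (σ m))
    (hσr : ∀ m r, σ (rM m r) = rN (σ m) r) (hπl : ∀ l n, π (lN l n) = lM l (π n))
    (hπr : ∀ n r, π (rN n r) = rM (π n) r) (h : Function.LeftInverse π σ) :
    BDiv L R lM rM lN rN :=
  ⟨1, AddMonoidHom.pi fun _ => σ, π.comp (Pi.evalAddMonoidHom _ 0),
    fun l m => funext fun _ => hσl l m, fun m r => funext fun _ => hσr m r,
    fun l v => hπl l (v 0), fun v r => hπr (v 0) r, h⟩

open TensorSq in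
theorem IsSepExt.exists_towerMap_rightInverse {B A E : Type} [Ring B] [Ring A] [Ring E]
    {φ : B →+* A} (hsep : IsSepExt φ) (ι : A →+* E) :
    ∃ σ : TensorSq ι →+ TensorSq (ι.comp φ),
      (∀ g t, σ (tL ι g t) = tL _ g (σ t)) ∧ (∀ g t, σ (tR ι g t) = tR _ g (σ t)) ∧
      Function.RightInverse σ (towerMap φ ι) := by
  obtain ⟨e, he_one, he_comm⟩ := hsep
  have hε (a : A) : tL _ (ι a) (map φ ι e) = tR _ (ι a) (map φ ι e) := by
    rw [← map_tL, he_comm, map_tR]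
  have hε_one : towerMap φ ι (map φ ι e) = tmk ι 1 1 := by
    rw [towerMap_map, he_one, map_one]
  exact ⟨splitting _ hε, splitting_tL hε, splitting_tR hε, towerMap_splitting hε hε_one⟩

theorem towerProj_eq_towerMap {B A : Type} [Ring B] [Ring A] (φ : B →+* A) :
    towerProj φ = TensorSq.towerMap φ (lam φ) :=
  TensorSq.addHom_ext _ fun _ _ => rfl

/-- If `A/B` is a separable extension, then the canonical `(E,E)`-bimodule epimorphism
`E ⊗_B E → E ⊗_A E` splits as a map of `(E,E)`-bimodules (via
`x ⊗_A y ↦ x e¹ ⊗_B e² y` for a separability element `e`); hence `E ⊗_A E` divides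
`E ⊗_B E` as `(E,E)`-bimodules, where `E = End(A_B)`. -/
theorem separable_towerProj_splits {B A : Type} [Ring B] [Ring A] (φ : B →+* A)
    (hsep : IsSepExt φ) :
    (∃ σ : TensorSq (lam φ) →+ TensorSq ((lam φ).comp φ),
      (∀ (e : ↥(endR φ)) (t : TensorSq (lam φ)),
        σ (tL (lam φ) e t) = tL ((lam φ).comp φ) e (σ t)) ∧
      (∀ (e : ↥(endR φ)) (t : TensorSq (lam φ)),
        σ (tR (lam φ) e t) = tR ((lam φ).comp φ) e (σ t)) ∧
      ∀ t, towerProj φ (σ t) = t) ∧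
    BDiv (↥(endR φ)) (↥(endR φ))
      (fun e t => tL (lam φ) e t) (fun t e => tR (lam φ) e t)
      (fun e t => tL ((lam φ).comp φ) e t) (fun t e => tR ((lam φ).comp φ) e t) := by
  obtain ⟨σ, hσL, hσR, hσ⟩ := hsep.exists_towerMap_rightInverse (lam φ)
  rw [towerProj_eq_towerMap]
  refine ⟨⟨σ, hσL, hσR, hσ⟩, BDiv.of_leftInverse σ _ hσL (fun t g => hσR g t)
    (TensorSq.towerMap_tL φ _) (fun t g => TensorSq.towerMap_tR φ _ g t) hσ⟩
end
end
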